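/- arXiv:1905.07811 — 2 statements merged into one kernel-verified Lean document; each statement's English description precedes it below -/
import Mathlib

section
/- There exists R₀ > 0 (depending only on c and N) such that if R ≥ R₀, then for every integer k ≥ 1, f has no zeros on the annulus B_k = {z : 4R_k ≤ |z| ≤ R_{k+1}/4}. -/
open Complex

noncomputable section

/-- `f₀(z) = z² + c` iterated `N` times. -/
def f0iter (c : ℂ) (N : ℕ) (z : ℂ) : ℂ := (fun w => w ^ 2 + c)^[N] z

/-- `n_k = 2^(N + k - 1)`. -/
def nseq (N k : ℕ) : ℕ := 2 ^ (N + k - 1)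

/-- The radii `R_k`: `R₁ = 2R`, `R_{k+1} = max {|f_k(z)| : |z| = 2 R_k}` where
`f_k(z) = f₀^N(z) · ∏_{j=1}^k (1 - (1/2)(z/R_j)^{n_j})`. -/
def Rseq (c : ℂ) (N : ℕ) (R : ℝ) : ℕ → ℝ
  | 0 => R
  | 1 => 2 * R
  | k + 2 =>
      sSup ((fun z => ‖f0iter c N z *
        ∏ j ∈ (Finset.Icc 1 (k + 1)).attach,
          (1 - (1 / 2) * (z / ((Rseq c N R j.1 : ℝ) : ℂ)) ^ nseq N j.1)‖) ''
        Metric.sphere (0 : ℂ) (2 * Rseq c N R (k + 1)))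
  decreasing_by
  · have := j.2; simp only [Finset.mem_Icc] at this; omega
  · omega

/-- `F_k(z) = 1 - (1/2)(z/R_k)^{n_k}`. -/
def Fseq (c : ℂ) (N : ℕ) (R : ℝ) (k : ℕ) (z : ℂ) : ℂ :=
  1 - (1 / 2) * (z / ((Rseq c N R k : ℝ) : ℂ)) ^ nseq N k

/-- The partial product `f_k(z) = f₀^N(z) · ∏_{j=1}^k F_j(z)`. -/
def fseq (c : ℂ) (N : ℕ) (R : ℝ) (k : ℕ) (z : ℂ) : ℂ :=
  f0iter c N z * ∏ j ∈ Finset.Icc 1 k, Fseq c N R j z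

/-- The infinite product `f(z) = f₀^N(z) · ∏_{k=1}^∞ F_k(z)`. -/
def flim (c : ℂ) (N : ℕ) (R : ℝ) (z : ℂ) : ℂ :=
  f0iter c N z * ∏' k : ℕ, Fseq c N R (k + 1) z

/-- The standing assumption `1/2 ≤ |f₀^N(z)|/|z|^{2^N} ≤ 2` for `|z| ≥ R`. -/
def OneBound (c : ℂ) (N : ℕ) (R : ℝ) : Prop :=
  ∀ z : ℂ, R ≤ ‖z‖ →
    1 / 2 ≤ ‖f0iter c N z‖ / ‖z‖ ^ 2 ^ N ∧
    ‖f0iter c N z‖ / ‖z‖ ^ 2 ^ N ≤ 2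

/-- `C₁ = R₁^{n₁}/2`, and for `k ≥ 2`,
`C_k = (-1)^{k-1} 2^{-k} R_k^{n_k} ∏_{j=1}^{k-1} R_j^{-n_j}`. -/
def Cseq (c : ℂ) (N : ℕ) (R : ℝ) (k : ℕ) : ℝ :=
  (-1) ^ (k - 1) * Rseq c N R k ^ nseq N k /
    (2 ^ k * ∏ j ∈ Finset.Icc 1 (k - 1), Rseq c N R j ^ nseq N j)

/-! Take `R₀ = 1`. For `R ≥ 1` the radii grow geometrically, `R_{k+1} ≥ 4 R_k`: on
`|w| = 2 R_k`, `|f₀^N(w)| ≥ |w|^{2^N} / 2` and every factor `F_j`, `j ≤ k`, has modulus at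
least `1`. On the annulus `B_k` the factor `f₀^N` does not vanish because `|z| ≥ R`, the factors
`F_j` with `j ≤ k` are dominated by their monomial since `|z| ≥ 2 R_j`, and the factors with
`j > k` satisfy `|F_j(z) - 1| ≤ 4^{-n_j} / 2` since `|z| ≤ R_j / 4`. An infinite product of
nonzero factors with summable distance to `1` does not vanish. -/

lemma tprod_ne_zero_of_summable_norm_sub_one {ι R : Type*} [NormedCommRing R] [NormOneClass R]
    [CompleteSpace R] [NormMulClass R] {g : ι → R} (hg : ∀ i, g i ≠ 0)
    (hs : Summable fun i => ‖g i - 1‖) : ∏' i, g i ≠ 0 := by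
  simpa using tprod_one_add_ne_zero_of_summable (f := fun i => g i - 1) (by simpa using hg) hs

section Factor

variable {r : ℝ} {z : ℂ} {n : ℕ}

lemma norm_half_mul_div_pow (hr : 0 < r) :
    ‖(1 / 2 : ℂ) * (z / (r : ℂ)) ^ n‖ = 1 / 2 * (‖z‖ / r) ^ n := by
  simp [norm_real, abs_of_pos hr]

lemma one_le_norm_one_sub_half_mul_div_pow (hr : 0 < r) (hn : 2 ≤ n) (hz : 2 * r ≤ ‖z‖) :
    1 ≤ ‖1 - (1 / 2 : ℂ) * (z / (r : ℂ)) ^ n‖ := by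
  have h2 : 2 ≤ ‖z‖ / r := by rw [le_div_iff₀ hr]; linarith
  have h4 : (4 : ℝ) ≤ (‖z‖ / r) ^ n := calc
    (4 : ℝ) = 2 ^ 2 := by norm_num
    _ ≤ 2 ^ n := pow_le_pow_right₀ one_le_two hn
    _ ≤ _ := pow_le_pow_left₀ zero_le_two h2 n
  calc (1 : ℝ) ≤ 1 / 2 * (‖z‖ / r) ^ n - ‖(1 : ℂ)‖ := by rw [norm_one]; linarith
    _ = ‖(1 / 2 : ℂ) * (z / (r : ℂ)) ^ n‖ - ‖(1 : ℂ)‖ := by rw [norm_half_mul_div_pow hr]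
    _ ≤ _ := (norm_sub_norm_le _ _).trans_eq (norm_sub_rev _ _)

lemma norm_half_mul_div_pow_le (hr : 0 < r) (hz : ‖z‖ ≤ r / 4) :
    ‖(1 / 2 : ℂ) * (z / (r : ℂ)) ^ n‖ ≤ 1 / 2 * (1 / 4) ^ n := by
  rw [norm_half_mul_div_pow hr]
  have : ‖z‖ / r ≤ 1 / 4 := by rw [div_le_iff₀ hr]; linarith
  gcongr

end Factor

lemma two_le_nseq {N j : ℕ} (hN : 1 ≤ N) (hj : 1 ≤ j) : 2 ≤ nseq N j :=
  le_self_pow₀ one_le_two (by omega)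

lemma le_nseq (N j : ℕ) : j ≤ nseq N j :=
  calc j ≤ 2 ^ (j - 1) := by have := Nat.lt_two_pow_self (n := j - 1); omega
    _ ≤ nseq N j := Nat.pow_le_pow_right two_pos (by omega)

section Radii

variable {c : ℂ} {N : ℕ} {R : ℝ}

lemma Rseq_one : Rseq c N R 1 = 2 * R := by rw [Rseq]

lemma Rseq_add_two (k : ℕ) :
    Rseq c N R (k + 2) =
      sSup ((‖fseq c N R (k + 1) ·‖) '' Metric.sphere 0 (2 * Rseq c N R (k + 1))) := by
  rw [Rseq]
  congr with z
  exact congrArg (‖f0iter c N z * ·‖) (Finset.prod_attach _ (Fseq c N R · z))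

lemma continuous_f0iter : Continuous (f0iter c N) :=
  (by fun_prop : Continuous fun w : ℂ => w ^ 2 + c).iterate N

lemma continuous_fseq (k : ℕ) : Continuous (fseq c N R k) := by
  unfold fseq Fseq
  exact continuous_f0iter.mul (continuous_finsetProd _ fun j _ => by fun_prop)

lemma norm_fseq_le_Rseq_succ {m : ℕ} (hm : 1 ≤ m) {w : ℂ} (hw : ‖w‖ = 2 * Rseq c N R m) :
    ‖fseq c N R m w‖ ≤ Rseq c N R (m + 1) := by
  obtain ⟨k, rfl⟩ : ∃ k, m = k + 1 := ⟨m - 1, by omega⟩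
  rw [Rseq_add_two]
  exact le_csSup ((isCompact_sphere 0 _).image (continuous_fseq _).norm).bddAbove
    ⟨w, by simpa using hw, rfl⟩

lemma OneBound.half_mul_pow_le_norm (hOB : OneBound c N R) {w : ℂ} (hw : R ≤ ‖w‖) :
    1 / 2 * ‖w‖ ^ 2 ^ N ≤ ‖f0iter c N w‖ := by
  rcases (norm_nonneg w).eq_or_lt with h | h
  · simp [← h]
  · have := (hOB w hw).1
    rwa [le_div_iff₀ (by positivity)] at this

variable (hN : 1 ≤ N) (hR : 1 ≤ R) (hOB : OneBound c N R)
include hN hR hOB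

lemma four_mul_Rseq_le_Rseq_succ_of_bounds {m : ℕ} (hm : 1 ≤ m)
    (hbounds : ∀ j ∈ Finset.Icc 1 m,
      Rseq c N R 1 ≤ Rseq c N R j ∧ Rseq c N R j ≤ Rseq c N R m) :
    4 * Rseq c N R m ≤ Rseq c N R (m + 1) := by
  set t := Rseq c N R m
  have ht : 2 * R ≤ t := Rseq_one (c := c) (N := N) ▸ (hbounds m (by simp [hm])).1
  set w : ℂ := ((2 * t : ℝ) : ℂ)
  have hw : ‖w‖ = 2 * t := by simp [w, abs_of_pos (by linarith : 0 < t)]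
  have hfactors : 1 ≤ ∏ j ∈ Finset.Icc 1 m, ‖Fseq c N R j w‖ := by
    refine Finset.one_le_prod fun j hj => ?_
    obtain ⟨h1j, hjt⟩ := hbounds j hj
    exact one_le_norm_one_sub_half_mul_div_pow (by rw [Rseq_one] at h1j; linarith)
      (two_le_nseq hN (Finset.mem_Icc.1 hj).1) (by linarith)
  have hpow : 4 * t ≤ 1 / 2 * (2 * t) ^ 2 ^ N := by
    have := pow_le_pow_right₀ (by linarith : 1 ≤ 2 * t) (le_self_pow₀ one_le_two (by omega) :
      2 ≤ 2 ^ N)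
    nlinarith
  calc 4 * t ≤ 1 / 2 * (2 * t) ^ 2 ^ N * 1 := by linarith
    _ ≤ ‖f0iter c N w‖ * ∏ j ∈ Finset.Icc 1 m, ‖Fseq c N R j w‖ :=
      mul_le_mul (hw ▸ hOB.half_mul_pow_le_norm (by linarith)) hfactors zero_le_one
        (norm_nonneg _)
    _ = ‖fseq c N R m w‖ := by rw [fseq, norm_mul, norm_prod]
    _ ≤ _ := norm_fseq_le_Rseq_succ hm hw

lemma Rseq_bounds {m : ℕ} (hm : 1 ≤ m) :
    ∀ j ∈ Finset.Icc 1 m, Rseq c N R 1 ≤ Rseq c N R j ∧ Rseq c N R j ≤ Rseq c N R m := by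
  induction m, hm using Nat.le_induction with
  | base => simp
  | succ m hm ih =>
    have hstep := four_mul_Rseq_le_Rseq_succ_of_bounds hN hR hOB hm ih
    have h1m := (ih m (by simp [hm])).1
    have hpos : 0 < Rseq c N R 1 := by rw [Rseq_one]; linarith
    intro j hj
    obtain ⟨h1j, hjm⟩ := Finset.mem_Icc.1 hj
    rcases hjm.eq_or_lt with rfl | hlt
    · exact ⟨by linarith, le_rfl⟩
    · obtain ⟨h1, h2⟩ := ih j (Finset.mem_Icc.2 ⟨h1j, by omega⟩)
      exact ⟨h1, by linarith⟩

lemma Rseq_mono {i j : ℕ} (hi : 1 ≤ i) (hij : i ≤ j) : Rseq c N R i ≤ Rseq c N R j :=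
  (Rseq_bounds hN hR hOB (hi.trans hij) i (Finset.mem_Icc.2 ⟨hi, hij⟩)).2

lemma two_mul_le_Rseq {j : ℕ} (hj : 1 ≤ j) : 2 * R ≤ Rseq c N R j :=
  Rseq_one (c := c) (N := N) ▸ Rseq_mono hN hR hOB le_rfl hj

lemma four_mul_Rseq_le_Rseq_succ {m : ℕ} (hm : 1 ≤ m) :
    4 * Rseq c N R m ≤ Rseq c N R (m + 1) :=
  four_mul_Rseq_le_Rseq_succ_of_bounds hN hR hOB hm (Rseq_bounds hN hR hOB hm)

variable {k : ℕ} {z : ℂ}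

lemma one_le_norm_Fseq {j : ℕ} (hj : 1 ≤ j) (hjk : j ≤ k) (hz : 4 * Rseq c N R k ≤ ‖z‖) :
    1 ≤ ‖Fseq c N R j z‖ :=
  one_le_norm_one_sub_half_mul_div_pow (by linarith [two_mul_le_Rseq hN hR hOB hj])
    (two_le_nseq hN hj) (by linarith [Rseq_mono hN hR hOB hj hjk, two_mul_le_Rseq hN hR hOB hj])

lemma norm_Fseq_sub_one_le {j : ℕ} (hkj : k < j) (hz : ‖z‖ ≤ Rseq c N R (k + 1) / 4) :
    ‖Fseq c N R j z - 1‖ ≤ 1 / 2 * (1 / 4) ^ nseq N j := by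
  rw [Fseq, sub_sub_cancel_left, norm_neg]
  exact norm_half_mul_div_pow_le (by linarith [two_mul_le_Rseq hN hR hOB (by omega : 1 ≤ j)])
    (by linarith [Rseq_mono hN hR hOB (by omega : 1 ≤ k + 1) hkj])

lemma Fseq_ne_zero (hz₁ : 4 * Rseq c N R k ≤ ‖z‖) (hz₂ : ‖z‖ ≤ Rseq c N R (k + 1) / 4)
    {j : ℕ} (hj : 1 ≤ j) : Fseq c N R j z ≠ 0 := by
  rcases le_or_gt j k with hjk | hkj
  · exact norm_pos_iff.1 (one_pos.trans_le (one_le_norm_Fseq hN hR hOB hj hjk hz₁))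
  · intro h0
    have := norm_Fseq_sub_one_le hN hR hOB hkj hz₂
    rw [h0, zero_sub, norm_neg, norm_one] at this
    linarith [pow_le_one₀ (by norm_num : (0 : ℝ) ≤ 1 / 4) (by norm_num) (n := nseq N j)]

lemma summable_norm_Fseq_sub_one (hz : ‖z‖ ≤ Rseq c N R (k + 1) / 4) :
    Summable fun j => ‖Fseq c N R (j + 1) z - 1‖ := by
  refine (summable_nat_add_iff k).1 (Summable.of_nonneg_of_le (fun _ => norm_nonneg _)
    (fun j => ?_) (summable_geometric_of_lt_one (by norm_num : (0 : ℝ) ≤ 1 / 4) (by norm_num)))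
  calc ‖Fseq c N R (j + k + 1) z - 1‖ ≤ 1 / 2 * (1 / 4) ^ nseq N (j + k + 1) :=
        norm_Fseq_sub_one_le hN hR hOB (by omega) hz
    _ ≤ (1 / 4) ^ nseq N (j + k + 1) := by
      have := pow_nonneg (by norm_num : (0 : ℝ) ≤ 1 / 4) (nseq N (j + k + 1))
      linarith
    _ ≤ (1 / 4) ^ j := pow_le_pow_of_le_one (by norm_num) (by norm_num)
        ((by omega : j ≤ j + k + 1).trans (le_nseq N _))

end Radii

/-- There is `R₀ > 0` (depending only on `c`, `N`) such that for `R ≥ R₀` and every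
`k ≥ 1`, `f` has no zeros on `B_k = {z : 4R_k ≤ |z| ≤ R_{k+1}/4}`. -/
theorem stmt10 (c : ℂ) (N : ℕ) (hN : 10 ≤ N) :
    ∃ R₀ : ℝ, 0 < R₀ ∧
      ∀ R : ℝ, R₀ ≤ R → OneBound c N R →
        ∀ k : ℕ, 1 ≤ k → ∀ z : ℂ,
          4 * Rseq c N R k ≤ ‖z‖ → ‖z‖ ≤ Rseq c N R (k + 1) / 4 →
          flim c N R z ≠ 0 := by
  refine ⟨1, one_pos, fun R hR hOB k hk z hz₁ hz₂ => ?_⟩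
  have hN₁ : 1 ≤ N := by omega
  have hzR : 8 * R ≤ ‖z‖ := by linarith [two_mul_le_Rseq hN₁ hR hOB hk]
  have hf0 : f0iter c N z ≠ 0 := by
    refine norm_pos_iff.1 (lt_of_lt_of_le ?_ (hOB.half_mul_pow_le_norm (by linarith)))
    have : 0 < ‖z‖ := by linarith
    positivity
  exact mul_ne_zero hf0 (tprod_ne_zero_of_summable_norm_sub_one
    (fun j => Fseq_ne_zero hN₁ hR hOB hz₁ hz₂ (by omega))
    (summable_norm_Fseq_sub_one hN₁ hR hOB hz₂))

end
end

section
/- There exists R₀ > 0 (depending only on c and N) such that if R ≥ R₀, then for every integer k ≥ 1: 1/8 ≤ R_{k+1}/(|C_k|·2^{2n_k}) ≤ 8. -/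
open Complex

noncomputable section

/-!
On the circle `|z| = 2 R_k` every factor `F_j(z) = 1 - u_j(z)` of `f_k` has
`|u_j(z)| ≥ 2 ^ (j + 1)`, so `|F_j(z)| = |u_j(z)| (1 ± 2 ^ (-j-1))`, and these relative errors
multiply to a factor in `[1/2, 2]`. Together with `|f₀^N(z)| ∈ [1/2, 2] |z| ^ 2 ^ N` this puts
`|f_k|` on that circle, hence its maximum `R_{k+1}`, within a factor `4` of the modulus
`|C_k| 2 ^ (2 n_k)` of the leading term of `f_k`. Since `|C_k| 2 ^ (2 n_k) ≥ 4 R_k`, the radii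
increase, which keeps the hypotheses `R ≤ R_j ≤ R_k` of this estimate true in an induction on `k`.
-/

namespace Finset

variable {ι : Type*}

theorem one_sub_sum_le_prod_one_sub (s : Finset ι) {δ : ι → ℝ} (h0 : ∀ i ∈ s, 0 ≤ δ i)
    (h1 : ∀ i ∈ s, δ i ≤ 1) : 1 - ∑ i ∈ s, δ i ≤ ∏ i ∈ s, (1 - δ i) := by
  classical
  induction s using Finset.induction_on with
  | empty => simp
  | insert a s ha ih =>
    rw [sum_insert ha, prod_insert ha]
    have ih' := ih (fun i hi => h0 i (mem_insert_of_mem hi))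
      (fun i hi => h1 i (mem_insert_of_mem hi))
    have hsum : 0 ≤ ∑ i ∈ s, δ i := sum_nonneg fun i hi => h0 i (mem_insert_of_mem hi)
    nlinarith [h0 a (mem_insert_self a s), h1 a (mem_insert_self a s)]

theorem half_le_prod_one_sub (s : Finset ι) {δ : ι → ℝ} (h0 : ∀ i ∈ s, 0 ≤ δ i)
    (hsum : ∑ i ∈ s, δ i ≤ 1 / 2) : 1 / 2 ≤ ∏ i ∈ s, (1 - δ i) := by
  linarith [one_sub_sum_le_prod_one_sub s h0 fun i hi => by linarith [single_le_sum h0 hi]]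

theorem prod_one_add_le_two (s : Finset ι) {δ : ι → ℝ} (h0 : ∀ i ∈ s, 0 ≤ δ i)
    (hsum : ∑ i ∈ s, δ i ≤ 1 / 2) : ∏ i ∈ s, (1 + δ i) ≤ 2 := by
  have hlow := half_le_prod_one_sub s h0 hsum
  have hmul : (∏ i ∈ s, (1 + δ i)) * ∏ i ∈ s, (1 - δ i) ≤ 1 := by
    rw [← prod_mul_distrib]
    refine prod_le_one (fun i hi => ?_) fun i hi => ?_
    · nlinarith [h0 i hi, single_le_sum h0 hi]
    · nlinarith [h0 i hi]
  have hpos : 0 ≤ ∏ i ∈ s, (1 + δ i) := prod_nonneg fun i hi => by linarith [h0 i hi]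
  nlinarith

end Finset

theorem norm_prod_one_sub_mem_Icc {ι 𝕜 : Type*} [NormedField 𝕜] (s : Finset ι)
    (u : ι → 𝕜) {δ : ι → ℝ} (h0 : ∀ i ∈ s, 0 ≤ δ i) (hsum : ∑ i ∈ s, δ i ≤ 1 / 2)
    (hu : ∀ i ∈ s, 1 ≤ ‖u i‖ * δ i) :
    ‖∏ i ∈ s, (1 - u i)‖ ∈
      Set.Icc ((∏ i ∈ s, ‖u i‖) / 2) (2 * ∏ i ∈ s, ‖u i‖) := by
  have hlow (i) (hi : i ∈ s) : ‖u i‖ * (1 - δ i) ≤ ‖1 - u i‖ := by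
    have := norm_sub_norm_le (u i) 1
    rw [norm_sub_rev, norm_one] at this
    linarith [hu i hi]
  have hup (i) (hi : i ∈ s) : ‖1 - u i‖ ≤ ‖u i‖ * (1 + δ i) := by
    have := norm_sub_le (1 : 𝕜) (u i)
    rw [norm_one] at this
    linarith [hu i hi]
  have hprod_nonneg : 0 ≤ ∏ i ∈ s, ‖u i‖ := Finset.prod_nonneg fun i _ => norm_nonneg _
  rw [norm_prod]
  constructor
  · calc (∏ i ∈ s, ‖u i‖) / 2
        ≤ (∏ i ∈ s, ‖u i‖) * ∏ i ∈ s, (1 - δ i) := by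
          nlinarith [Finset.half_le_prod_one_sub s h0 hsum]
      _ = ∏ i ∈ s, ‖u i‖ * (1 - δ i) := Finset.prod_mul_distrib.symm
      _ ≤ ∏ i ∈ s, ‖1 - u i‖ := Finset.prod_le_prod
          (fun i hi => mul_nonneg (norm_nonneg _) (by linarith [Finset.single_le_sum h0 hi])) hlow
  · calc ∏ i ∈ s, ‖1 - u i‖
        ≤ ∏ i ∈ s, ‖u i‖ * (1 + δ i) :=
          Finset.prod_le_prod (fun _ _ => norm_nonneg _) hup
      _ = (∏ i ∈ s, ‖u i‖) * ∏ i ∈ s, (1 + δ i) := Finset.prod_mul_distrib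
      _ ≤ 2 * ∏ i ∈ s, ‖u i‖ := by
          nlinarith [Finset.prod_one_add_le_two s h0 hsum]

theorem sum_Icc_one_half_pow_succ (k : ℕ) :
    ∑ j ∈ Finset.Icc 1 k, (1 / 2 : ℝ) ^ (j + 1) = 1 / 2 - (1 / 2) ^ (k + 1) := by
  induction k with
  | zero => simp
  | succ n ih => rw [Finset.sum_Icc_succ_top (by omega), ih]; ring

theorem csSup_image_mem_Icc {α β : Type*} [ConditionallyCompleteLattice β] {S : Set α}
    (hS : S.Nonempty) {g : α → β} {a b : β} (h : ∀ z ∈ S, g z ∈ Set.Icc a b) :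
    sSup (g '' S) ∈ Set.Icc a b := by
  have hbdd : BddAbove (g '' S) := ⟨b, by rintro _ ⟨z, hz, rfl⟩; exact (h z hz).2⟩
  obtain ⟨z, hz⟩ := hS
  exact ⟨(h z hz).1.trans (le_csSup hbdd ⟨z, hz, rfl⟩),
    csSup_le ⟨g z, z, hz, rfl⟩ (by rintro _ ⟨w, hw, rfl⟩; exact (h w hw).2)⟩

section Radii

variable {c : ℂ} {N : ℕ} {R : ℝ}

theorem Rseq_succ {k : ℕ} (hk : 1 ≤ k) :
    Rseq c N R (k + 1) =
      sSup ((fun z => ‖fseq c N R k z‖) '' Metric.sphere 0 (2 * Rseq c N R k)) := by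
  obtain ⟨m, rfl⟩ := Nat.exists_eq_add_of_le' hk
  rw [Rseq]
  simp only [fseq, Fseq]
  congr! 4 with z
  exact Finset.prod_attach _ fun j => 1 - 1 / 2 * (z / ((Rseq c N R j : ℝ) : ℂ)) ^ nseq N j

theorem two_pow_add_sum_nseq {k : ℕ} (hk : 1 ≤ k) :
    2 ^ N + ∑ j ∈ Finset.Icc 1 k, nseq N j = 2 * nseq N k := by
  induction k, hk using Nat.le_induction with
  | base => simp [nseq]; ring
  | succ k hk ih =>
    rw [Finset.sum_Icc_succ_top (by omega), ← add_assoc, ih]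
    simp only [nseq, show N + (k + 1) - 1 = N + k - 1 + 1 by omega, pow_succ]
    ring

theorem two_pow_succ_le_half_mul_pow (hN : 2 ≤ N) (j : ℕ) {t : ℝ} (ht : 2 ≤ t) :
    (2 : ℝ) ^ (j + 1) ≤ 1 / 2 * t ^ nseq N j := by
  have hexp : j + 2 ≤ nseq N j :=
    (Nat.lt_two_pow_self (n := j + 1)).trans_le (Nat.pow_le_pow_right (by norm_num) (by omega))
  calc (2 : ℝ) ^ (j + 1) = 1 / 2 * 2 ^ (j + 2) := by ring
    _ ≤ 1 / 2 * 2 ^ nseq N j := by gcongr; norm_num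
    _ ≤ 1 / 2 * t ^ nseq N j := by gcongr

-- `|C_k| 2 ^ (2 n_k)` is the modulus of the leading term of `f_k` on the circle `|z| = 2 R_k`.
theorem leading_term_norm_eq {k : ℕ} (hk : 1 ≤ k)
    (hpos : ∀ j ∈ Finset.Icc 1 k, 0 < Rseq c N R j) :
    (2 * Rseq c N R k) ^ 2 ^ N *
        ∏ j ∈ Finset.Icc 1 k, 1 / 2 * (2 * Rseq c N R k / Rseq c N R j) ^ nseq N j =
      |Cseq c N R k| * 2 ^ (2 * nseq N k) := by
  set Rk := Rseq c N R k
  set P := ∏ j ∈ Finset.Icc 1 (k - 1), Rseq c N R j ^ nseq N j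
  have hRk : 0 < Rk := hpos k (by simp [hk])
  have hP : 0 < P := Finset.prod_pos fun j hj =>
    pow_pos (hpos j (by simp only [Finset.mem_Icc] at hj ⊢; omega)) _
  have hprod : ∏ j ∈ Finset.Icc 1 k, 1 / 2 * (2 * Rk / Rseq c N R j) ^ nseq N j =
      (2 * Rk) ^ (∑ j ∈ Finset.Icc 1 k, nseq N j) / (2 ^ k * (P * Rk ^ nseq N k)) := by
    have hsplit : ∏ j ∈ Finset.Icc 1 k, Rseq c N R j ^ nseq N j = P * Rk ^ nseq N k := by
      obtain ⟨m, rfl⟩ := Nat.exists_eq_add_of_le' hk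
      exact Finset.prod_Icc_succ_top (by omega) _
    rw [Finset.prod_mul_distrib, Finset.prod_const, Nat.card_Icc, Nat.add_sub_cancel]
    simp only [div_pow]
    rw [Finset.prod_div_distrib, Finset.prod_pow_eq_pow_sum, hsplit]
    ring
  have hC : |Cseq c N R k| = Rk ^ nseq N k / (2 ^ k * P) := by
    rw [Cseq, abs_div, abs_mul, abs_pow, abs_neg, abs_one, one_pow, one_mul,
      abs_of_pos (pow_pos hRk _), abs_of_pos (by positivity)]
  rw [hprod, hC, ← mul_div_assoc, ← pow_add, two_pow_add_sum_nseq hk, mul_pow]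
  field_simp
  ring

theorem four_mul_Rseq_le (hN : 2 ≤ N) (hR : 1 ≤ R) {k : ℕ} (hk : 1 ≤ k)
    (hradii : ∀ j ∈ Finset.Icc 1 k, Rseq c N R j ∈ Set.Icc R (Rseq c N R k)) :
    4 * Rseq c N R k ≤ |Cseq c N R k| * 2 ^ (2 * nseq N k) := by
  have hRk : 1 ≤ Rseq c N R k := hR.trans (hradii k (by simp [hk])).1
  have hprod :
      1 ≤ ∏ j ∈ Finset.Icc 1 k, 1 / 2 * (2 * Rseq c N R k / Rseq c N R j) ^ nseq N j := by
    refine (Finset.prod_const_one).symm.le.trans (Finset.prod_le_prod (fun _ _ => zero_le_one)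
      fun j hj => ?_)
    have hRj : 0 < Rseq c N R j := by linarith [(hradii j hj).1]
    have ht : 2 ≤ 2 * Rseq c N R k / Rseq c N R j := by
      rw [le_div_iff₀ hRj]; linarith [(hradii j hj).2]
    exact (one_le_pow₀ (by norm_num)).trans (two_pow_succ_le_half_mul_pow hN j ht)
  rw [← leading_term_norm_eq hk fun j hj => by linarith [(hradii j hj).1]]
  calc 4 * Rseq c N R k ≤ (2 * Rseq c N R k) ^ 2 := by nlinarith
    _ ≤ (2 * Rseq c N R k) ^ 2 ^ N := pow_le_pow_right₀ (by linarith)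
        (by simpa using Nat.pow_le_pow_right two_pos (by omega : 1 ≤ N))
    _ ≤ _ := le_mul_of_one_le_right (by positivity) hprod

theorem norm_fseq_mem_Icc (hN : 2 ≤ N) (hR : 0 < R) (hOB : OneBound c N R) {k : ℕ}
    (hk : 1 ≤ k)
    (hradii : ∀ j ∈ Finset.Icc 1 k, Rseq c N R j ∈ Set.Icc R (Rseq c N R k))
    {z : ℂ} (hz : ‖z‖ = 2 * Rseq c N R k) :
    ‖fseq c N R k z‖ ∈ Set.Icc (|Cseq c N R k| * 2 ^ (2 * nseq N k) / 4)
      (4 * (|Cseq c N R k| * 2 ^ (2 * nseq N k))) := by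
  set u : ℕ → ℂ := fun j => 1 / 2 * (z / ((Rseq c N R j : ℝ) : ℂ)) ^ nseq N j
  have hpos (j) (hj : j ∈ Finset.Icc 1 k) : 0 < Rseq c N R j := hR.trans_le (hradii j hj).1
  have hnorm_u (j) (hj : j ∈ Finset.Icc 1 k) :
      ‖u j‖ = 1 / 2 * (2 * Rseq c N R k / Rseq c N R j) ^ nseq N j := by
    simp only [u, norm_mul, norm_pow, norm_div, Complex.norm_real, Real.norm_of_nonneg
      (hpos j hj).le, hz]
    norm_num
  have hfactors :=
    norm_prod_one_sub_mem_Icc (Finset.Icc 1 k) u (δ := fun j => (1 / 2) ^ (j + 1))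
    (fun _ _ => by positivity)
    (by rw [sum_Icc_one_half_pow_succ]; linarith [pow_pos (one_half_pos (α := ℝ)) (k + 1)])
    (fun j hj => by
      have ht : 2 ≤ 2 * Rseq c N R k / Rseq c N R j := by
        rw [le_div_iff₀ (hpos j hj)]; linarith [(hradii j hj).2, hpos j hj]
      calc (1 : ℝ) = 2 ^ (j + 1) * (1 / 2) ^ (j + 1) := by rw [← mul_pow]; norm_num
        _ ≤ ‖u j‖ * (1 / 2) ^ (j + 1) := by
          rw [hnorm_u j hj]; gcongr; exact two_pow_succ_le_half_mul_pow hN j ht)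
  have hD :
      ‖z‖ ^ 2 ^ N * ∏ j ∈ Finset.Icc 1 k, ‖u j‖ =
        |Cseq c N R k| * 2 ^ (2 * nseq N k) := by
    rw [Finset.prod_congr rfl hnorm_u, hz, leading_term_norm_eq hk hpos]
  have hzpos : 0 < ‖z‖ ^ 2 ^ N := by rw [hz]; have := hpos k (by simp [hk]); positivity
  obtain ⟨hf0_lo, hf0_hi⟩ := hOB z (by rw [hz]; linarith [(hradii k (by simp [hk])).1])
  rw [div_le_iff₀ hzpos] at hf0_hi
  rw [le_div_iff₀ hzpos] at hf0_lo
  have hfseq :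
      ‖fseq c N R k z‖ = ‖f0iter c N z‖ * ‖∏ j ∈ Finset.Icc 1 k, (1 - u j)‖ :=
    norm_mul _ _
  rw [hfseq, ← hD]
  have hP : 0 ≤ ∏ j ∈ Finset.Icc 1 k, ‖u j‖ := Finset.prod_nonneg fun _ _ => norm_nonneg _
  constructor <;> nlinarith [hfactors.1, hfactors.2, norm_nonneg (f0iter c N z)]

theorem Rseq_succ_mem_Icc (hN : 2 ≤ N) (hR : 0 < R) (hOB : OneBound c N R) {k : ℕ}
    (hk : 1 ≤ k)
    (hradii : ∀ j ∈ Finset.Icc 1 k, Rseq c N R j ∈ Set.Icc R (Rseq c N R k)) :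
    Rseq c N R (k + 1) ∈ Set.Icc (|Cseq c N R k| * 2 ^ (2 * nseq N k) / 4)
      (4 * (|Cseq c N R k| * 2 ^ (2 * nseq N k))) := by
  have hRk : 0 < Rseq c N R k := hR.trans_le (hradii k (by simp [hk])).1
  rw [Rseq_succ hk]
  exact csSup_image_mem_Icc (NormedSpace.sphere_nonempty.mpr (by positivity))
    fun z hz => norm_fseq_mem_Icc hN hR hOB hk hradii (mem_sphere_zero_iff_norm.mp hz)

theorem Rseq_mem_Icc (hN : 2 ≤ N) (hR : 1 ≤ R) (hOB : OneBound c N R) {k : ℕ} (hk : 1 ≤ k) :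
    ∀ j ∈ Finset.Icc 1 k, Rseq c N R j ∈ Set.Icc R (Rseq c N R k) := by
  induction k, hk using Nat.le_induction with
  | base =>
    intro j hj
    obtain rfl : j = 1 := by simpa using hj
    exact ⟨by simp only [Rseq]; linarith, le_rfl⟩
  | succ k hk ih =>
    have hstep : Rseq c N R k ≤ Rseq c N R (k + 1) := by
      linarith [four_mul_Rseq_le hN hR hk ih,
        (Rseq_succ_mem_Icc hN (by linarith) hOB hk ih).1]
    intro j hj
    rcases (Finset.mem_Icc.mp hj).2.lt_or_eq with hjk | rfl
    · obtain ⟨hRj, hjk⟩ := ih j (Finset.mem_Icc.mpr ⟨(Finset.mem_Icc.mp hj).1, by omega⟩)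
      exact ⟨hRj, hjk.trans hstep⟩
    · exact ⟨(ih k (by simp [hk])).1.trans hstep, le_rfl⟩

end Radii

/-- There is `R₀ > 0` (depending only on `c`, `N`) such that for `R ≥ R₀` and every
`k ≥ 1`: `1/8 ≤ R_{k+1}/(|C_k| · 2^{2n_k}) ≤ 8`. -/
theorem stmt14 (c : ℂ) (N : ℕ) (hN : 10 ≤ N) :
    ∃ R₀ : ℝ, 0 < R₀ ∧
      ∀ R : ℝ, R₀ ≤ R → OneBound c N R →
        ∀ k : ℕ, 1 ≤ k →
          1 / 8 ≤ Rseq c N R (k + 1) / (|Cseq c N R k| * 2 ^ (2 * nseq N k)) ∧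
          Rseq c N R (k + 1) / (|Cseq c N R k| * 2 ^ (2 * nseq N k)) ≤ 8 := by
  refine ⟨1, one_pos, fun R hR hOB k hk => ?_⟩
  have hradii := Rseq_mem_Icc (by omega) hR hOB hk
  obtain ⟨hlo, hhi⟩ := Rseq_succ_mem_Icc (by omega) (one_pos.trans_le hR) hOB hk hradii
  have hD : 0 < |Cseq c N R k| * 2 ^ (2 * nseq N k) := by
    linarith [four_mul_Rseq_le (by omega) hR hk hradii, (hradii k (by simp [hk])).1]
  rw [le_div_iff₀ hD, div_le_iff₀ hD]
  constructor <;> linarith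

end
end
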